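/- Let d ∈ ℕ, let (A_j)_{j∈J} ⊆ GL(d,ℝ) and (b_j)_{j∈J} ⊆ ℝ^d with J countable, set S_j := A_j(·)+b_j, let (w_j)_{j∈J} be positive weights, let (Q_j')_{j∈J} be bounded measurable subsets of ℝ^d, and let ĝ ∈ C^{d+1}(ℝ^d). Suppose A' > 0 satisfies A' ≤ ∑_{j∈J} |ĝ(S_j^{-1}η)|² for almost every η ∈ ℝ^d. Define M₀ := sup_{i∈J} ∑_{j∈J} max{1, ‖A_j^{-1}A_i‖^{d+1}}·(∫_{Q_i'} max_{|α|≤d+1} |(∂^α ĝ)(S_j^{-1}(S_i ξ))|^{2(d+1)} dξ)^{1/(d+1)} and Ŷ_{i,j} := L_{i,j}·∫_{Q_i'} (1+|S_j^{-1}(S_i ξ)|)^{2d+2}·max_{|α|≤d+1} |(∂^α ĝ)(S_j^{-1}(S_i ξ))| dξ with L_{i,j} := max{w_i/w_j, w_j/w_i}·(max{1, ‖A_i^{-1}A_j‖²}·max{1, ‖A_j^{-1}A_i‖³})^{d+1}. Then for every i ∈ J: ‖Ŷ‖_Schur ≥ √(A')·λ(Q_i') and M₀ ≥ A'·(λ(Q_i'))^{1/(d+1)};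 consequently M₀^{(d+1)/(d+2)}·(‖Ŷ‖²_Schur)^{1/(d+2)} ≥ A'·sup_{i∈J} (λ(Q_i'))^{3/(d+2)}. -/

import Mathlib

/-!
Substituting `η = S_i ξ` in the lower bound gives `A' ≤ ∑_j |ĝ(S_j⁻¹ S_i ξ)|²` for a.e. `ξ`.
Since `∑_j a_j² ≤ (∑_j a_j)²`, also `√A' ≤ ∑_j |ĝ(S_j⁻¹ S_i ξ)|`; integrating over `Q_i'` bounds
`√A' λ(Q_i')` by the `i`-th row sum of `Ŷ`, whose prefactors are at least `1`. Integrating the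
first bound instead and applying Hölder with exponents `d + 1` and `(d + 1)/d` to each term gives
`A' λ(Q_i') ≤ M₀ λ(Q_i')^{d/(d+1)}`, and `λ(Q_i') < ∞` lets one cancel. The last claim is the
weighted geometric mean of the two bounds, with weights `(d+1)/(d+2)` and `1/(d+2)`.
-/

open MeasureTheory Matrix
open scoped ENNReal FourierTransform

noncomputable section

/-- `ℝ^d` with the Euclidean norm. -/
abbrev Ed (d : ℕ) : Type := EuclideanSpace ℝ (Fin d)

/-- A matrix acting on `ℝ^d`. -/
def matVec {d : ℕ} (A : Matrix (Fin d) (Fin d) ℝ) (x : Ed d) : Ed d :=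
  WithLp.toLp 2 (fun i => ∑ j, A i j * x j)

/-- The operator norm of a matrix, with respect to the Euclidean norm. -/
def matOpNorm {d : ℕ} (A : Matrix (Fin d) (Fin d) ℝ) : ℝ :=
  ⨆ x : Metric.closedBall (0 : Ed d) 1, ‖matVec A (x : Ed d)‖

/-- The partial derivative `∂_i f` of a function `f : ℝ^d → ℂ`. -/
def pd {d : ℕ} (i : Fin d) (f : Ed d → ℂ) : Ed d → ℂ :=
  fun x => fderiv ℝ f x (EuclideanSpace.single i 1)

/-- The multi-index partial derivative `∂^α f` of `f : ℝ^d → ℂ`. -/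
def mIdxDeriv {d : ℕ} (α : Fin d → ℕ) (f : Ed d → ℂ) : Ed d → ℂ :=
  ((List.finRange d).flatMap fun i => List.replicate (α i) i).foldr pd f

/-- `max_{|α| ≤ N} |∂^α f (ξ)|`. -/
def maxDeriv {d : ℕ} (N : ℕ) (f : Ed d → ℂ) (ξ : Ed d) : ℝ :=
  ⨆ α : {α : Fin d → ℕ // ∑ i, α i ≤ N}, ‖mIdxDeriv (α : Fin d → ℕ) f ξ‖

/-- The Schur norm of a nonnegative matrix. -/
def schurNorm {I J : Type*} (M : I → J → ℝ≥0∞) : ℝ≥0∞ :=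
  max (⨆ i, ∑' j, M i j) (⨆ j, ∑' i, M i j)

lemma mIdxDeriv_zero {d : ℕ} (f : Ed d → ℂ) : mIdxDeriv (fun _ => 0) f = f := by
  rw [mIdxDeriv, List.flatMap_eq_nil_iff.mpr (by simp), List.foldr_nil]

instance {d N : ℕ} : Finite {α : Fin d → ℕ // ∑ i, α i ≤ N} :=
  Set.Finite.to_subtype <| (Set.Finite.pi' fun _ => Set.finite_Iic N).subset
    fun _ hα i => (Finset.single_le_sum (fun _ _ => Nat.zero_le _) (Finset.mem_univ i)).trans hα

lemma norm_le_maxDeriv {d : ℕ} (N : ℕ) (f : Ed d → ℂ) (ξ : Ed d) : ‖f ξ‖ ≤ maxDeriv N f ξ := by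
  simpa [maxDeriv, mIdxDeriv_zero] using le_ciSup (Set.finite_range
    fun α : {α : Fin d → ℕ // ∑ i, α i ≤ N} => ‖mIdxDeriv (α : Fin d → ℕ) f ξ‖).bddAbove
    ⟨fun _ => 0, by simp⟩

lemma setLIntegral_enorm_comp_le_ofReal_mul {d : ℕ} (N k : ℕ) (f : Ed d → ℂ)
    (S : Ed d → Ed d) (s : Set (Ed d)) {C : ℝ} (hC : 1 ≤ C) :
    ∫⁻ ξ in s, ‖f (S ξ)‖ₑ ≤
      ENNReal.ofReal C * ∫⁻ ξ in s, ENNReal.ofReal ((1 + ‖S ξ‖) ^ k * maxDeriv N f (S ξ)) := by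
  refine (lintegral_mono fun ξ => ?_).trans (le_mul_of_one_le_left' (ENNReal.one_le_ofReal.mpr hC))
  rw [← ofReal_norm]
  refine ENNReal.ofReal_le_ofReal ?_
  have hk : 1 ≤ (1 + ‖S ξ‖) ^ k := one_le_pow₀ (by linarith [norm_nonneg (S ξ)])
  nlinarith [norm_le_maxDeriv N f (S ξ), norm_nonneg (f (S ξ))]

lemma setLIntegral_enorm_comp_pow_rpow_le {d : ℕ} (N m : ℕ) (f : Ed d → ℂ) (S : Ed d → Ed d)
    (s : Set (Ed d)) {p : ℝ} (hp : 0 ≤ p) (x : ℝ) :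
    (∫⁻ ξ in s, ‖f (S ξ)‖ₑ ^ m) ^ p ≤
      ENNReal.ofReal (max 1 x) * (∫⁻ ξ in s, ENNReal.ofReal (maxDeriv N f (S ξ)) ^ m) ^ p := by
  refine le_mul_of_one_le_of_le (ENNReal.one_le_ofReal.mpr (le_max_left _ _)) ?_
  gcongr with ξ
  rw [← ofReal_norm]
  exact ENNReal.ofReal_le_ofReal (norm_le_maxDeriv _ _ _)

lemma matVec_eq_toLpLin {d : ℕ} (A : Matrix (Fin d) (Fin d) ℝ) : matVec A = toLpLin 2 2 A := by
  funext x
  ext i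
  simp [matVec, toLpLin_apply, mulVec, dotProduct]

lemma continuous_matVec {d : ℕ} (A : Matrix (Fin d) (Fin d) ℝ) : Continuous (matVec A) := by
  rw [matVec_eq_toLpLin]
  exact (toLpLin 2 2 A).continuous_of_finiteDimensional

lemma quasiMeasurePreserving_matVec_add {d : ℕ} {A : Matrix (Fin d) (Fin d) ℝ}
    (hA : IsUnit A.det) (b : Ed d) :
    Measure.QuasiMeasurePreserving (fun ξ => matVec A ξ + b) volume volume := by
  rw [matVec_eq_toLpLin]
  refine (measurePreserving_add_right volume b).quasiMeasurePreserving.comp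
    (Measure.LinearMap.quasiMeasurePreserving volume _ ?_)
  rwa [LinearMap.det_toLpLin, ← isUnit_iff_ne_zero]

lemma one_le_max_div_div_mul_pow {a b : ℝ} (ha : 0 < a) (hb : 0 < b) (x y : ℝ) (n : ℕ) :
    1 ≤ max (a / b) (b / a) * (max 1 x * max 1 y) ^ n := by
  refine one_le_mul_of_one_le_of_one_le ?_
    (one_le_pow₀ (one_le_mul_of_one_le_of_one_le (le_max_left _ _) (le_max_left _ _)))
  rcases le_total a b with h | h
  · exact ((one_le_div ha).mpr h).trans (le_max_right _ _)
  · exact ((one_le_div hb).mpr h).trans (le_max_left _ _)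

namespace ENNReal

lemma ofReal_sqrt_sq (x : ℝ) : ENNReal.ofReal √x ^ 2 = ENNReal.ofReal x := by
  rw [← ENNReal.ofReal_pow (Real.sqrt_nonneg x), Real.sq_sqrt']
  simp

lemma ofReal_tsum_le_tsum_ofReal {ι : Type*} {f : ι → ℝ} (hf : ∀ j, 0 ≤ f j) :
    ENNReal.ofReal (∑' j, f j) ≤ ∑' j, ENNReal.ofReal (f j) := by
  by_cases hs : Summable f
  · rw [ENNReal.ofReal_tsum_of_nonneg hf hs]
  · simp [tsum_eq_zero_of_not_summable hs]

lemma ofReal_le_tsum_enorm_sq {ι E : Type*} [SeminormedAddGroup E] {c : ℝ} {x : ι → E}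
    (h : c ≤ ∑' j, ‖x j‖ ^ 2) : ENNReal.ofReal c ≤ ∑' j, ‖x j‖ₑ ^ 2 := by
  refine (ENNReal.ofReal_le_ofReal h).trans <|
    (ENNReal.ofReal_tsum_le_tsum_ofReal fun j => by positivity).trans_eq ?_
  simp [ENNReal.ofReal_pow (norm_nonneg _)]

lemma tsum_sq_le_sq_tsum {ι : Type*} (a : ι → ℝ≥0∞) : ∑' j, a j ^ 2 ≤ (∑' j, a j) ^ 2 := by
  simp only [sq, ← ENNReal.tsum_mul_right]
  exact ENNReal.tsum_le_tsum fun j => mul_le_mul_right (ENNReal.le_tsum j) _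

lemma le_of_mul_le_mul_rpow {c M V : ℝ≥0∞} {p q : ℝ} (hp : 0 < p) (hq : 0 ≤ q) (hpq : p + q = 1)
    (hV : V ≠ ∞) (h : c * V ≤ M * V ^ q) : c * V ^ p ≤ M := by
  rcases eq_or_ne V 0 with rfl | hV0
  · simp [ENNReal.zero_rpow_of_pos hp]
  have hsplit : V = V ^ p * V ^ q := by
    rw [← ENNReal.rpow_add_of_nonneg _ _ hp.le hq, hpq, ENNReal.rpow_one]
  nth_rewrite 1 [hsplit] at h
  rw [← mul_assoc] at h
  exact (ENNReal.mul_le_mul_iff_left (ENNReal.rpow_pos (pos_iff_ne_zero.mpr hV0) hV).ne'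
    (ENNReal.rpow_ne_top_of_nonneg hq hV)).mp h

lemma mul_rpow_three_div_le (n : ℕ) {s V M S : ℝ≥0∞}
    (hM : s ^ 2 * V ^ (1 / ((n : ℝ) + 1)) ≤ M) (hS : s * V ≤ S) :
    s ^ 2 * V ^ (3 / ((n : ℝ) + 2)) ≤
      M ^ (((n : ℝ) + 1) / ((n : ℝ) + 2)) * (S ^ 2) ^ (1 / ((n : ℝ) + 2)) := by
  have hn : (0 : ℝ) < n + 1 := by positivity
  calc s ^ 2 * V ^ (3 / ((n : ℝ) + 2))
      = (s ^ 2 * V ^ (1 / ((n : ℝ) + 1))) ^ (((n : ℝ) + 1) / ((n : ℝ) + 2)) *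
          ((s * V) ^ 2) ^ (1 / ((n : ℝ) + 2)) := by
        rw [mul_pow, ENNReal.mul_rpow_of_nonneg _ _ (by positivity),
          ENNReal.mul_rpow_of_nonneg _ _ (by positivity), mul_mul_mul_comm]
        simp only [← ENNReal.rpow_natCast, ← ENNReal.rpow_mul]
        rw [← ENNReal.rpow_add_of_nonneg _ _ (by positivity) (by positivity),
          ← ENNReal.rpow_add_of_nonneg _ _ (by positivity) (by positivity)]
        congr 2 <;> push_cast <;> field_simp <;> ring
    _ ≤ _ := by gcongr

end ENNReal

section Integrals

variable {α ι : Type*} [MeasurableSpace α] [Countable ι] {μ : Measure α}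

lemma mul_measure_le_tsum_setLIntegral {f : ι → α → ℝ≥0∞} {s : Set α}
    (hf : ∀ j, AEMeasurable (f j) (μ.restrict s)) {c : ℝ≥0∞} (h : ∀ᵐ x ∂μ, c ≤ ∑' j, f j x) :
    c * μ s ≤ ∑' j, ∫⁻ x in s, f j x ∂μ := by
  rw [← lintegral_tsum hf, ← setLIntegral_const]
  exact lintegral_mono_ae (ae_restrict_of_ae h)

lemma lintegral_le_lintegral_pow_mul_measure_univ (μ : Measure α) (n : ℕ) {f : α → ℝ≥0∞}
    (hf : AEMeasurable f μ) :
    ∫⁻ x, f x ∂μ ≤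
      (∫⁻ x, f x ^ (n + 1) ∂μ) ^ (1 / ((n : ℝ) + 1)) * μ Set.univ ^ ((n : ℝ) / ((n : ℝ) + 1)) := by
  rcases Nat.eq_zero_or_pos n with rfl | hn
  · simp
  have hpq : ((n : ℝ) + 1).HolderConjugate (((n : ℝ) + 1) / n) :=
    Real.holderConjugate_iff.mpr ⟨by norm_cast; omega, by field_simp; ring⟩
  have holder := ENNReal.lintegral_mul_le_Lp_mul_Lq μ hpq hf (aemeasurable_const (b := 1))
  simp only [Pi.mul_apply, mul_one, ENNReal.one_rpow, lintegral_const, one_mul, one_div_div]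
    at holder
  simpa [← ENNReal.rpow_natCast] using holder

lemma mul_measure_le_tsum_setLIntegral_of_sq_le {a : ι → α → ℝ≥0∞} {s : Set α}
    (ha : ∀ j, AEMeasurable (a j) (μ.restrict s)) {c : ℝ≥0∞}
    (h : ∀ᵐ x ∂μ, c ^ 2 ≤ ∑' j, a j x ^ 2) :
    c * μ s ≤ ∑' j, ∫⁻ x in s, a j x ∂μ :=
  mul_measure_le_tsum_setLIntegral ha <| h.mono fun _ hx =>
    (ENNReal.pow_le_pow_left_iff two_ne_zero).mp (hx.trans (ENNReal.tsum_sq_le_sq_tsum _))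

lemma mul_measure_rpow_le_tsum {a : ι → α → ℝ≥0∞} {s : Set α}
    (ha : ∀ j, AEMeasurable (a j) (μ.restrict s)) (hs : μ s ≠ ∞) (n : ℕ) {c : ℝ≥0∞}
    (h : ∀ᵐ x ∂μ, c ≤ ∑' j, a j x ^ 2) :
    c * μ s ^ (1 / ((n : ℝ) + 1)) ≤
      ∑' j, (∫⁻ x in s, a j x ^ (2 * (n + 1)) ∂μ) ^ (1 / ((n : ℝ) + 1)) := by
  refine ENNReal.le_of_mul_le_mul_rpow (q := n / ((n : ℝ) + 1)) (by positivity) (by positivity)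
    (by field_simp; ring) hs ?_
  calc c * μ s ≤ ∑' j, ∫⁻ x in s, a j x ^ 2 ∂μ :=
        mul_measure_le_tsum_setLIntegral (fun j => (ha j).pow_const 2) h
    _ ≤ ∑' j, (∫⁻ x in s, a j x ^ (2 * (n + 1)) ∂μ) ^ (1 / ((n : ℝ) + 1)) *
          μ s ^ (n / ((n : ℝ) + 1)) := by
        refine ENNReal.tsum_le_tsum fun j => ?_
        have := lintegral_le_lintegral_pow_mul_measure_univ (μ.restrict s) n ((ha j).pow_const 2)
        simp_rw [← pow_mul, Measure.restrict_apply_univ] at this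
        exact this
    _ = _ := ENNReal.tsum_mul_right

end Integrals

theorem stmt19_general (d : ℕ) {J : Type*} [Countable J]
    (A : J → Matrix (Fin d) (Fin d) ℝ) (hA : ∀ j, IsUnit (A j).det)
    (b : J → Ed d) (w : J → ℝ) (hw : ∀ j, 0 < w j)
    (Q' : J → Set (Ed d))
    (hQb : ∀ j, Bornology.IsBounded (Q' j))
    (ghat : Ed d → ℂ) (hghat : ContDiff ℝ ((d : ℕ∞) + 1) ghat)
    (A' : ℝ)
    (hlow : ∀ᵐ η : Ed d, A' ≤ ∑' j, ‖ghat (matVec (A j)⁻¹ (η - b j))‖ ^ 2)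
    -- `S_j⁻¹ ∘ S_i`
    (SjiS : J → J → Ed d → Ed d)
    (hSjiS : ∀ i j, SjiS i j = fun ξ => matVec (A j)⁻¹ (matVec (A i) ξ + b i - b j))
    (M₀ : ℝ≥0∞)
    (hM₀ : M₀ = ⨆ i, ∑' j,
      ENNReal.ofReal (max 1 (matOpNorm ((A j)⁻¹ * A i) ^ (d + 1))) *
        (∫⁻ ξ in Q' i,
            ENNReal.ofReal (maxDeriv (d + 1) ghat (SjiS i j ξ)) ^ (2 * (d + 1))) ^
          (1 / ((d : ℝ) + 1)))
    (Yhat : J → J → ℝ≥0∞)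
    (hYhat : ∀ i j, Yhat i j =
      ENNReal.ofReal (max (w i / w j) (w j / w i) *
        (max 1 (matOpNorm ((A i)⁻¹ * A j) ^ 2) *
          max 1 (matOpNorm ((A j)⁻¹ * A i) ^ 3)) ^ (d + 1)) *
      ∫⁻ ξ in Q' i,
        ENNReal.ofReal ((1 + ‖SjiS i j ξ‖) ^ (2 * d + 2) * maxDeriv (d + 1) ghat (SjiS i j ξ))) :
    (∀ i : J,
      ENNReal.ofReal (Real.sqrt A') * volume (Q' i) ≤ schurNorm Yhat ∧
      ENNReal.ofReal A' * volume (Q' i) ^ (1 / ((d : ℝ) + 1)) ≤ M₀) ∧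
    ENNReal.ofReal A' * ⨆ i : J, volume (Q' i) ^ (3 / ((d : ℝ) + 2))
      ≤ M₀ ^ (((d : ℝ) + 1) / ((d : ℝ) + 2)) * (schurNorm Yhat ^ 2) ^ (1 / ((d : ℝ) + 2)) := by
  have hS (i j : J) : Continuous (SjiS i j) := by
    rw [hSjiS]
    exact (continuous_matVec _).comp (((continuous_matVec _).add continuous_const).sub
      continuous_const)
  have hmeas (i j : J) : AEMeasurable (fun ξ => ‖ghat (SjiS i j ξ)‖ₑ) (volume.restrict (Q' i)) :=
    (hghat.continuous.comp (hS i j)).enorm.aemeasurable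
  have hbound (i : J) : ∀ᵐ ξ, ENNReal.ofReal A' ≤ ∑' j, ‖ghat (SjiS i j ξ)‖ₑ ^ 2 := by
    simpa only [hSjiS] using (quasiMeasurePreserving_matVec_add (hA i) (b i)).ae
      (hlow.mono fun _ => ENNReal.ofReal_le_tsum_enorm_sq)
  have hschur (i : J) : ENNReal.ofReal √A' * volume (Q' i) ≤ schurNorm Yhat :=
    calc _ ≤ ∑' j, ∫⁻ ξ in Q' i, ‖ghat (SjiS i j ξ)‖ₑ :=
          mul_measure_le_tsum_setLIntegral_of_sq_le (hmeas i)
            (by simpa only [ENNReal.ofReal_sqrt_sq] using hbound i)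
      _ ≤ ∑' j, Yhat i j := ENNReal.tsum_le_tsum fun j => by
          rw [hYhat]
          exact setLIntegral_enorm_comp_le_ofReal_mul _ _ _ _ _
            (one_le_max_div_div_mul_pow (hw i) (hw j) _ _ _)
      _ ≤ schurNorm Yhat := (le_iSup (fun i => ∑' j, Yhat i j) i).trans (le_max_left _ _)
  have hM (i : J) : ENNReal.ofReal A' * volume (Q' i) ^ (1 / ((d : ℝ) + 1)) ≤ M₀ :=
    calc _ ≤ ∑' j, (∫⁻ ξ in Q' i, ‖ghat (SjiS i j ξ)‖ₑ ^ (2 * (d + 1))) ^ (1 / ((d : ℝ) + 1)) :=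
          mul_measure_rpow_le_tsum (hmeas i) (hQb i).measure_lt_top.ne d (hbound i)
      _ ≤ M₀ := hM₀ ▸ le_iSup_of_le i (ENNReal.tsum_le_tsum fun j =>
          setLIntegral_enorm_comp_pow_rpow_le _ _ _ _ _ (by positivity) _)
  refine ⟨fun i => ⟨hschur i, hM i⟩, ?_⟩
  rw [ENNReal.mul_iSup, ← ENNReal.ofReal_sqrt_sq A']
  exact iSup_le fun i => ENNReal.mul_rpow_three_div_le d
    (by rw [ENNReal.ofReal_sqrt_sq]; exact hM i) (hschur i)

/-- Under the Calderón-type lower bound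
`A' ≤ ∑_j |ĝ(S_j⁻¹ η)|²` (a.e. `η`), with `M₀` and `Ŷ` as in the paper, one has, for every
`i ∈ J`:  `‖Ŷ‖_Schur ≥ √A' · λ(Q_i')` and `M₀ ≥ A' · λ(Q_i')^{1/(d+1)}`; consequently
`M₀^{(d+1)/(d+2)} · (‖Ŷ‖²_Schur)^{1/(d+2)} ≥ A' · sup_i λ(Q_i')^{3/(d+2)}`. -/
theorem stmt19 (d : ℕ) {J : Type*} [Countable J]
    (A : J → Matrix (Fin d) (Fin d) ℝ) (hA : ∀ j, IsUnit (A j).det)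
    (b : J → Ed d) (w : J → ℝ) (hw : ∀ j, 0 < w j)
    (Q' : J → Set (Ed d)) (hQm : ∀ j, MeasurableSet (Q' j))
    (hQb : ∀ j, Bornology.IsBounded (Q' j))
    (ghat : Ed d → ℂ) (hghat : ContDiff ℝ ((d : ℕ∞) + 1) ghat)
    (A' : ℝ) (hA' : 0 < A')
    (hlow : ∀ᵐ η : Ed d, A' ≤ ∑' j, ‖ghat (matVec (A j)⁻¹ (η - b j))‖ ^ 2)
    -- `S_j⁻¹ ∘ S_i`
    (SjiS : J → J → Ed d → Ed d)
    (hSjiS : ∀ i j, SjiS i j = fun ξ => matVec (A j)⁻¹ (matVec (A i) ξ + b i - b j))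
    (M₀ : ℝ≥0∞)
    (hM₀ : M₀ = ⨆ i, ∑' j,
      ENNReal.ofReal (max 1 (matOpNorm ((A j)⁻¹ * A i) ^ (d + 1))) *
        (∫⁻ ξ in Q' i,
            ENNReal.ofReal (maxDeriv (d + 1) ghat (SjiS i j ξ)) ^ (2 * (d + 1))) ^
          (1 / ((d : ℝ) + 1)))
    (Yhat : J → J → ℝ≥0∞)
    (hYhat : ∀ i j, Yhat i j =
      ENNReal.ofReal (max (w i / w j) (w j / w i) *
        (max 1 (matOpNorm ((A i)⁻¹ * A j) ^ 2) *
          max 1 (matOpNorm ((A j)⁻¹ * A i) ^ 3)) ^ (d + 1)) *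
      ∫⁻ ξ in Q' i,
        ENNReal.ofReal ((1 + ‖SjiS i j ξ‖) ^ (2 * d + 2) * maxDeriv (d + 1) ghat (SjiS i j ξ))) :
    (∀ i : J,
      ENNReal.ofReal (Real.sqrt A') * volume (Q' i) ≤ schurNorm Yhat ∧
      ENNReal.ofReal A' * volume (Q' i) ^ (1 / ((d : ℝ) + 1)) ≤ M₀) ∧
    ENNReal.ofReal A' * ⨆ i : J, volume (Q' i) ^ (3 / ((d : ℝ) + 2))
      ≤ M₀ ^ (((d : ℝ) + 1) / ((d : ℝ) + 2)) * (schurNorm Yhat ^ 2) ^ (1 / ((d : ℝ) + 2)) :=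
  stmt19_general d A hA b w hw Q' hQb ghat hghat A' hlow SjiS hSjiS M₀ hM₀ Yhat hYhat

end
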